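/- arXiv:0902.2155 — 2 statements merged into one kernel-verified Lean document; each statement's English description precedes it below -/
import Mathlib

section
/- Let F be a supertropical semifield and let f, g, h ∈ F[λ] be full polynomials of positive degree. Then ν(|Re(f, g·h)|) = ν(|Re(f,g)| · |Re(f,h)|) and ν(|Re(f·g, h)|) = ν(|Re(f,h)| · |Re(g,h)|). -/
open Polynomial

/-- A supertropical semiring: a commutative semiring with an idempotent
ghost map `nu` (a semiring homomorphism onto the ghost ideal), satisfying
supertropicality and bipotence. -/
class Supertropical (R : Type*) extends CommSemiring R where
  nu : R → R
  nu_idem : ∀ a : R, nu (nu a) = nu a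
  nu_add : ∀ a b : R, nu (a + b) = nu a + nu b
  nu_mul : ∀ a b : R, nu (a * b) = nu a * nu b
  nu_zero : nu (0 : R) = 0
  supertropicality : ∀ a b : R, nu a = nu b → a + b = nu a
  bipotence : ∀ a b : R, a + b = a ∨ a + b = b ∨ (a + b = nu a ∧ nu a = nu b)

namespace Supertropical

variable {R : Type*} [Supertropical R]

/-- membership in the ghost ideal `G₀ = {a | ν a = a}` -/
def ghost (a : R) : Prop := nu a = a

/-- tangible elements: `T = R \ (G₀ ∪ {0})` (note `0 ∈ G₀`). -/
def tangible (a : R) : Prop := ¬ ghost a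

/-- the order on ν-values: `a^ν ≤ b^ν` iff `a^ν + b^ν = b^ν` -/
def nuLe (a b : R) : Prop := nu a + nu b = nu b

/-- strict order on ν-values -/
def nuLt (a b : R) : Prop := nuLe a b ∧ nu a ≠ nu b

/-- the basic open interval `W_{α,β} = {a | α^ν < a^ν < β^ν}` of the ν-topology -/
def interval (α β : R) : Set R := {a : R | nuLt α a ∧ nuLt a β}

/-- the tangible open interval `W_{α,β} ∩ T` -/
def tangInterval (α β : R) : Set R := {a : R | tangible a ∧ nuLt α a ∧ nuLt a β}

/-- `R` is connected if no open interval is the union of two disjoint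
nonempty open intervals. -/
def STConnected (R : Type*) [Supertropical R] : Prop :=
  ¬ ∃ α β γ₁ δ₁ γ₂ δ₂ : R,
      interval α β = interval γ₁ δ₁ ∪ interval γ₂ δ₂ ∧
      interval γ₁ δ₁ ∩ interval γ₂ δ₂ = (∅ : Set R) ∧
      (interval γ₁ δ₁).Nonempty ∧ (interval γ₂ δ₂).Nonempty

end Supertropical

open Supertropical

/-- A supertropical semifield: the tangible elements form a multiplicative
abelian group, and `ν(T) = G₀ \ {0}`. -/
class STSemifield (R : Type*) extends Supertropical R where
  tangible_one : tangible (1 : R)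
  tangible_mul : ∀ a b : R, tangible a → tangible b → tangible (a * b)
  tangible_inv : ∀ a : R, tangible a → ∃ b : R, tangible b ∧ a * b = 1
  nu_onto : ∀ g : R, ghost g → g ≠ 0 → ∃ t : R, tangible t ∧ nu t = g

/-- An ℕ-divisible supertropical semifield. -/
class STDivSemifield (R : Type*) extends STSemifield R where
  divisible : ∀ (a : R) (n : ℕ), 1 ≤ n → ∃ b : R, b ^ n = a ∧ (tangible a → tangible b)

namespace Supertropical

variable {R : Type*} [Supertropical R]

/-- a polynomial is ghost if all its values are ghost -/
def ghostPoly (f : R[X]) : Prop := ∀ a : R, ghost (f.eval a)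

/-- e-equivalence of polynomials: they define the same function -/
def eEquiv (f g : R[X]) : Prop := ∀ a : R, f.eval a = g.eval a

/-- `g` e-divides `f` if `f` is e-equivalent to `g * h` for some `h` -/
def eDivides (g f : R[X]) : Prop := ∃ h : R[X], eEquiv f (g * h)

/-- a polynomial all of whose nonzero coefficients are tangible -/
def tangPoly (f : R[X]) : Prop := ∀ i : ℕ, f.coeff i ≠ 0 → tangible (f.coeff i)

/-- monic: leading coefficient `1` or `ν(1)` -/
def stMonic (f : R[X]) : Prop := f.leadingCoeff = 1 ∨ f.leadingCoeff = nu 1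

/-- a common tangible root of two polynomials -/
def commonTangibleRoot (f g : R[X]) (a : R) : Prop :=
  tangible a ∧ ghost (f.eval a) ∧ ghost (g.eval a)

/-- relative primeness of polynomials -/
def RelPrime (f g : R[X]) : Prop :=
  ¬ ∃ p q : R[X], tangPoly p ∧ tangPoly q ∧ ¬ (p = 0 ∧ q = 0) ∧
      p.natDegree < g.natDegree ∧ q.natDegree < f.natDegree ∧
      ghostPoly (p * f + q * g) ∧
      (p * f).natDegree = (q * g).natDegree ∧
      (p * f).natTrailingDegree = (q * g).natTrailingDegree

/-- a full polynomial: all coefficients up to the degree are nonzero, and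
`ν(αᵢ²) ≥ ν(α_{i-1}·α_{i+1})` for `0 < i < deg` -/
def fullPoly (f : R[X]) : Prop :=
  (∀ i ≤ f.natDegree, f.coeff i ≠ 0) ∧
  ∀ i : ℕ, 0 < i → i < f.natDegree →
    nuLe (f.coeff (i - 1) * f.coeff (i + 1)) (f.coeff i * f.coeff i)

end Supertropical

/-- the resultant matrix of `f` (of degree `m`) and `g` (of degree `n`):
rows `0 ≤ i < n` carry the coefficients of `f`, shifted, and
rows `n ≤ i < n + m` carry the coefficients of `g`, shifted. -/
def resMatrix {R : Type*} [CommSemiring R] (m n : ℕ) (f g : R[X]) :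
    Matrix (Fin (m + n)) (Fin (m + n)) R := fun i j =>
  if (i : ℕ) < n then
    (if (i : ℕ) ≤ (j : ℕ) then f.coeff ((j : ℕ) - (i : ℕ)) else 0)
  else
    (if (i : ℕ) - n ≤ (j : ℕ) then g.coeff ((j : ℕ) - ((i : ℕ) - n)) else 0)

/-- the supertropical determinant (permanent) of a square matrix -/
def sdet {R : Type*} [CommSemiring R] {k : ℕ} (A : Matrix (Fin k) (Fin k) R) : R :=
  ∑ σ : Equiv.Perm (Fin k), ∏ i, A i (σ i)

/-- the resultant `|Re(f,g)|` for `f` of degree `m` and `g` of degree `n` -/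
def resultant {R : Type*} [CommSemiring R] (m n : ℕ) (f g : R[X]) : R :=
  sdet (resMatrix m n f g)

/-- the resultant at the actual degrees of `f` and `g` -/
def Res {R : Type*} [CommSemiring R] (f g : R[X]) : R :=
  resultant f.natDegree g.natDegree f g


open Supertropical Polynomial


/-!
A full polynomial `g = ∑ β_k λ^k` of degree `n` factors, up to `ν`, as
`β_n ∏_{k<n} (λ + β_k / β_{k+1})`, and log-concavity makes these roots increase with `k`.
Correspondingly, for a full `f = ∑ α_σ λ^σ` of degree `m`,
`ν(|Re(f,g)| · ∏_{k<n} β_{k+1}^m) = ν(β_n^m ∏_{k<n} ∑_σ α_σ β_k^σ β_{k+1}^(m-σ))`,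
i.e. `|Re(f,g)| = β_n^m ∏_k f(β_k / β_{k+1})` up to `ν`.

To prove this, expand the determinant along its first column. If that column is taken by a row
of a block other than the block's leading row, exchanging the columns of the two rows does not
lower the `ν`-value of the term, by log-concavity of the block; so only the two leading rows
count, and `ν(|Re(f,g)|)` obeys the recursion defining `pathSum`. Comparing the recursion with the
product formula, a mixed term can again be traded, via log-concavity, for a dominating one.

The product of full polynomials is full, and its roots are those of the factors together: the
smallest one, say `β_0 / β_1`, peels off from `g h` as from `g`. This gives the first identity;
the second follows from it since `|Re(f,g)| = |Re(g,f)|`, the two matrices differing by a row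
permutation.
-/

namespace Supertropical

open Finset

section Order

variable {R : Type*} [Supertropical R]

theorem nuLe_of_nu_eq {a b : R} (h : nu a = nu b) : nuLe a b := by
  unfold nuLe
  rw [h, ← nu_add, supertropicality b b rfl, nu_idem]

theorem nuLe_refl (a : R) : nuLe a a := nuLe_of_nu_eq rfl

theorem nuLe.trans {a b c : R} (hab : nuLe a b) (hbc : nuLe b c) : nuLe a c := by
  unfold nuLe at *
  rw [← hbc, ← add_assoc, hab]

theorem nuLe.trans_eq {a b c : R} (hab : nuLe a b) (hbc : nu b = nu c) : nuLe a c :=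
  hab.trans (nuLe_of_nu_eq hbc)

theorem nuLe_antisymm {a b : R} (hab : nuLe a b) (hba : nuLe b a) : nu a = nu b := by
  unfold nuLe at *
  rw [← hab, add_comm, hba]

theorem nuLe_total (a b : R) : nuLe a b ∨ nuLe b a := by
  unfold nuLe
  rcases bipotence (nu a) (nu b) with h | h | ⟨h, h'⟩
  · exact Or.inr (by rwa [add_comm])
  · exact Or.inl h
  · rw [nu_idem, nu_idem] at h'
    exact Or.inl (by rw [h, h', nu_idem])

theorem zero_nuLe (a : R) : nuLe 0 a := by
  rw [nuLe, nu_zero, zero_add]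

theorem nuLe.mul_right {a b : R} (h : nuLe a b) (c : R) : nuLe (a * c) (b * c) := by
  unfold nuLe at *
  rw [nu_mul, nu_mul, ← add_mul, h]

theorem nuLe.mul_left {a b : R} (h : nuLe a b) (c : R) : nuLe (c * a) (c * b) := by
  rw [mul_comm c, mul_comm c]
  exact h.mul_right c

theorem nuLe.mul {a b c d : R} (hab : nuLe a b) (hcd : nuLe c d) : nuLe (a * c) (b * d) :=
  (hab.mul_right c).trans (hcd.mul_left b)

theorem nuLe.pow {a b : R} (h : nuLe a b) (k : ℕ) : nuLe (a ^ k) (b ^ k) := by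
  induction k with
  | zero => rw [pow_zero, pow_zero]; exact nuLe_refl 1
  | succ k ih => rw [pow_succ, pow_succ]; exact ih.mul h

theorem nu_mul_congr {a b c d : R} (hac : nu a = nu c) (hbd : nu b = nu d) :
    nu (a * b) = nu (c * d) := by
  rw [nu_mul, nu_mul, hac, hbd]

theorem nu_pow_congr {a b : R} (h : nu a = nu b) (k : ℕ) : nu (a ^ k) = nu (b ^ k) :=
  nuLe_antisymm ((nuLe_of_nu_eq h).pow k) ((nuLe_of_nu_eq h.symm).pow k)

theorem nuLe_add_left (a b : R) : nuLe a (a + b) := by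
  unfold nuLe
  rw [nu_add, ← add_assoc, ← nu_add, supertropicality a a rfl, nu_idem]

theorem nuLe_add_right (a b : R) : nuLe b (a + b) := by
  rw [add_comm]
  exact nuLe_add_left b a

theorem nuLe.add {a b c : R} (hac : nuLe a c) (hbc : nuLe b c) : nuLe (a + b) c := by
  unfold nuLe at *
  rw [nu_add, add_assoc, hbc, hac]

theorem nu_add_of_nuLe {a b : R} (h : nuLe a b) : nu (a + b) = nu b := by
  rw [nu_add]
  exact h

theorem nu_add_congr {a b c d : R} (hac : nu a = nu c) (hbd : nu b = nu d) :
    nu (a + b) = nu (c + d) := by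
  rw [nu_add, nu_add, hac, hbd]

theorem nu_add_eq_nu_add {x y z : R} (hzy : nuLe z y) (hy : nuLe y (x + z)) :
    nu (x + y) = nu (x + z) :=
  nuLe_antisymm ((nuLe_add_left x z).add hy)
    ((nuLe_add_left x y).add (hzy.trans (nuLe_add_right x y)))

section BigOperators

variable {ι : Type*} {s t : Finset ι} {f g : ι → R}

theorem nuLe_sum {i : ι} (hi : i ∈ s) : nuLe (f i) (∑ j ∈ s, f j) := by
  classical
  rw [← Finset.add_sum_erase s f hi]
  exact nuLe_add_left _ _

theorem sum_nuLe {c : R} (h : ∀ i ∈ s, nuLe (f i) c) : nuLe (∑ i ∈ s, f i) c := by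
  classical
  induction s using Finset.induction_on with
  | empty => exact zero_nuLe c
  | insert i s hi ih =>
    rw [Finset.sum_insert hi]
    exact (h i (s.mem_insert_self i)).add (ih fun j hj => h j (Finset.mem_insert_of_mem hj))

theorem sum_nuLe_sum (h : ∀ i ∈ s, nuLe (f i) (g i)) :
    nuLe (∑ i ∈ s, f i) (∑ i ∈ s, g i) :=
  sum_nuLe fun i hi => (h i hi).trans (nuLe_sum hi)

theorem nuLe_sum_of_subset (h : s ⊆ t) : nuLe (∑ i ∈ s, f i) (∑ i ∈ t, f i) := by
  classical
  rw [← Finset.sum_sdiff h]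
  exact nuLe_add_right _ _

theorem nu_sum_congr (h : ∀ i ∈ s, nu (f i) = nu (g i)) :
    nu (∑ i ∈ s, f i) = nu (∑ i ∈ s, g i) :=
  nuLe_antisymm (sum_nuLe_sum fun i hi => nuLe_of_nu_eq (h i hi))
    (sum_nuLe_sum fun i hi => nuLe_of_nu_eq (h i hi).symm)

theorem prod_nuLe_prod (h : ∀ i ∈ s, nuLe (f i) (g i)) :
    nuLe (∏ i ∈ s, f i) (∏ i ∈ s, g i) := by
  classical
  induction s using Finset.induction_on with
  | empty => exact nuLe_refl _
  | insert i s hi ih =>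
    rw [Finset.prod_insert hi, Finset.prod_insert hi]
    exact (h i (s.mem_insert_self i)).mul (ih fun j hj => h j (Finset.mem_insert_of_mem hj))

theorem nu_prod_congr (h : ∀ i ∈ s, nu (f i) = nu (g i)) :
    nu (∏ i ∈ s, f i) = nu (∏ i ∈ s, g i) :=
  nuLe_antisymm (prod_nuLe_prod fun i hi => nuLe_of_nu_eq (h i hi))
    (prod_nuLe_prod fun i hi => nuLe_of_nu_eq (h i hi).symm)

end BigOperators

end Order

section Semifield

variable {F : Type*} [STSemifield F]

theorem tangible_ne_zero {a : F} (h : tangible a) : a ≠ 0 := by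
  rintro rfl
  exact h nu_zero

instance : Nontrivial F := ⟨⟨1, 0, tangible_ne_zero STSemifield.tangible_one⟩⟩

theorem exists_tangible_nu_eq {c : F} (hc : c ≠ 0) : ∃ t : F, tangible t ∧ nu t = nu c := by
  by_cases hg : ghost c
  · obtain ⟨t, ht, htc⟩ := STSemifield.nu_onto c hg hc
    exact ⟨t, ht, htc.trans hg.symm⟩
  · exact ⟨c, hg, rfl⟩

theorem nu_one_ne_zero : nu (1 : F) ≠ 0 := by
  intro h
  have hnu : ∀ x : F, nu x = 0 := fun x => by rw [← mul_one x, nu_mul, h, mul_zero]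
  have h1 := supertropicality (1 : F) 0 (by rw [hnu, nu_zero])
  rw [add_zero, h] at h1
  exact one_ne_zero h1

theorem nu_ne_zero {a : F} (ha : a ≠ 0) : nu a ≠ 0 := by
  by_cases hg : ghost a
  · rwa [hg]
  · obtain ⟨b, -, hab⟩ := STSemifield.tangible_inv a hg
    intro h0
    apply nu_one_ne_zero (F := F)
    rw [← hab, nu_mul, h0, zero_mul]

instance : NoZeroDivisors F where
  eq_zero_or_eq_zero_of_mul_eq_zero {a b} hab := by
    by_contra! h
    obtain ⟨t, ht, hta⟩ := exists_tangible_nu_eq h.1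
    obtain ⟨u, hu, hub⟩ := exists_tangible_nu_eq h.2
    apply nu_ne_zero (tangible_ne_zero (STSemifield.tangible_mul t u ht hu))
    rw [nu_mul, hta, hub, ← nu_mul, hab, nu_zero]

theorem ne_zero_of_nuLe {a b : F} (h : nuLe a b) (ha : a ≠ 0) : b ≠ 0 := by
  rintro rfl
  rw [nuLe, nu_zero, add_zero] at h
  exact nu_ne_zero ha h

theorem nuLe.of_mul_right {a b c : F} (hc : c ≠ 0) (h : nuLe (a * c) (b * c)) : nuLe a b := by
  obtain ⟨t, ht, htc⟩ := exists_tangible_nu_eq hc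
  obtain ⟨u, -, htu⟩ := STSemifield.tangible_inv t ht
  have hcancel : ∀ x : F, nu (x * c * u) = nu x := fun x => by
    rw [nu_mul, nu_mul, ← htc, mul_assoc, ← nu_mul, htu, ← nu_mul, mul_one]
  have h' := h.mul_right u
  unfold nuLe at h' ⊢
  rwa [hcancel, hcancel] at h'

theorem nu_eq_of_mul_right {a b c : F} (hc : c ≠ 0) (h : nu (a * c) = nu (b * c)) :
    nu a = nu b :=
  nuLe_antisymm ((nuLe_of_nu_eq h).of_mul_right hc) ((nuLe_of_nu_eq h.symm).of_mul_right hc)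

end Semifield

section FullSeq

variable {F : Type*} [STSemifield F]

/-- The coefficient sequence of a full polynomial of degree `m`. -/
structure IsFullSeq (a : ℕ → F) (m : ℕ) : Prop where
  ne_zero : ∀ i ≤ m, a i ≠ 0
  eq_zero : ∀ i, m < i → a i = 0
  logConcave : ∀ k, nuLe (a k * a (k + 2)) (a (k + 1) * a (k + 1))

namespace IsFullSeq

variable {a : ℕ → F} {m : ℕ}

theorem nuLe_mul_succ (h : IsFullSeq a m) (x d : ℕ) :
    nuLe (a x * a (x + d + 2)) (a (x + 1) * a (x + d + 1)) := by
  induction d with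
  | zero => exact h.logConcave x
  | succ d ih =>
    by_cases hm : m < x + d + 3
    · rw [h.eq_zero (x + (d + 1) + 2) (by omega), mul_zero]
      exact zero_nuLe _
    have hprod := ih.mul (h.logConcave (x + d + 1))
    refine nuLe.of_mul_right (c := a (x + d + 1) * a (x + d + 2))
      (mul_ne_zero (h.ne_zero _ (by omega)) (h.ne_zero _ (by omega))) ?_
    convert hprod using 1 <;> ring_nf

theorem exchange (h : IsFullSeq a m) {x y x' y' : ℕ} (hsum : x + y = x' + y')
    (hx' : x ≤ x') (hy' : x ≤ y') (hx'y : x' ≤ y) (hy'y : y' ≤ y) :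
    nuLe (a x * a y) (a x' * a y') := by
  obtain ⟨d, hd⟩ : ∃ d, x' - x = d := ⟨_, rfl⟩
  induction d generalizing x y with
  | zero =>
    obtain rfl : x = x' := by omega
    obtain rfl : y = y' := by omega
    exact nuLe_refl _
  | succ d ih =>
    rcases hy'.eq_or_lt with rfl | hy'
    · obtain rfl : y = x' := by omega
      exact nuLe_of_nu_eq (by rw [mul_comm])
    obtain ⟨e, rfl⟩ : ∃ e, y = x + e + 2 := ⟨y - x - 2, by omega⟩
    exact (h.nuLe_mul_succ x e).trans
      (ih (x := x + 1) (y := x + e + 1) (by omega) (by omega) (by omega) (by omega) (by omega)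
        (by omega))

theorem shift (h : IsFullSeq a m) (hm : 1 ≤ m) : IsFullSeq (fun i => a (i + 1)) (m - 1) where
  ne_zero i hi := h.ne_zero _ (by omega)
  eq_zero i hi := h.eq_zero _ (by omega)
  logConcave k := h.logConcave (k + 1)

end IsFullSeq

theorem fullPoly.isFullSeq {f : F[X]} (hf : fullPoly f) : IsFullSeq f.coeff f.natDegree where
  ne_zero := hf.1
  eq_zero _ hi := coeff_eq_zero_of_natDegree_lt hi
  logConcave k := by
    by_cases hk : k + 2 ≤ f.natDegree
    · exact hf.2 (k + 1) (by omega) (by omega)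
    · rw [coeff_eq_zero_of_natDegree_lt (n := k + 2) (by omega), mul_zero]
      exact zero_nuLe _

end FullSeq

section Permanent

variable {R : Type*} [Supertropical R] {K : ℕ}

def permExt (i₀ : Fin (K + 1)) (σ : Equiv.Perm (Fin K)) : Equiv.Perm (Fin (K + 1)) :=
  (finSuccEquiv' i₀).trans (σ.optionCongr.trans (finSuccEquiv' 0).symm)

@[simp]
theorem permExt_apply_self (i₀ : Fin (K + 1)) (σ : Equiv.Perm (Fin K)) :
    permExt i₀ σ i₀ = 0 := by
  simp [permExt]

@[simp]
theorem permExt_apply_succAbove (i₀ : Fin (K + 1)) (σ : Equiv.Perm (Fin K)) (i : Fin K) :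
    permExt i₀ σ (i₀.succAbove i) = (σ i).succ := by
  simp [permExt]

theorem permExt_injective (i₀ : Fin (K + 1)) : Function.Injective (permExt i₀) := by
  intro σ σ' h
  ext i
  simpa using congrArg (fun τ => (τ (i₀.succAbove i) : ℕ)) h

theorem exists_permExt_eq {i₀ : Fin (K + 1)} {τ : Equiv.Perm (Fin (K + 1))} (hτ : τ i₀ = 0) :
    ∃ σ, permExt i₀ σ = τ := by
  let e : Equiv.Perm (Option (Fin K)) :=
    (finSuccEquiv' i₀).symm.trans (τ.trans (finSuccEquiv' 0))
  have he : e none = none := by simp [e, hτ]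
  refine ⟨e.removeNone, Equiv.ext fun x => ?_⟩
  rcases eq_or_ne x i₀ with rfl | hx
  · rw [hτ, permExt_apply_self]
  obtain ⟨i, rfl⟩ := Fin.exists_succAbove_eq hx
  have hsome : some (e.removeNone i) = e (some i) :=
    Equiv.removeNone_some e (Option.ne_none_iff_exists'.mp fun h => by
      simpa using e.injective (h.trans he.symm))
  have := congrArg (finSuccEquiv' (0 : Fin (K + 1))).symm hsome
  simp only [e, Equiv.trans_apply, finSuccEquiv'_symm_some, Equiv.symm_apply_apply] at this
  rw [permExt_apply_succAbove, ← this, Fin.zero_succAbove]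

theorem prod_permExt (M : Matrix (Fin (K + 1)) (Fin (K + 1)) R) (i₀ : Fin (K + 1))
    (σ : Equiv.Perm (Fin K)) :
    ∏ i, M i (permExt i₀ σ i) =
      M i₀ 0 * ∏ i, M.submatrix i₀.succAbove Fin.succ i (σ i) := by
  simp [Fin.prod_univ_succAbove _ i₀]

theorem nuLe_sdet_of_apply_eq_zero (M : Matrix (Fin (K + 1)) (Fin (K + 1)) R) {i₀ : Fin (K + 1)}
    {τ : Equiv.Perm (Fin (K + 1))} (hτ : τ i₀ = 0) :
    nuLe (∏ i, M i (τ i)) (M i₀ 0 * sdet (M.submatrix i₀.succAbove Fin.succ)) := by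
  obtain ⟨σ, rfl⟩ := exists_permExt_eq hτ
  rw [prod_permExt]
  exact (nuLe_sum (f := fun σ => ∏ i, M.submatrix i₀.succAbove Fin.succ i (σ i))
    (mem_univ σ)).mul_left _

theorem mul_sdet_submatrix_nuLe (M : Matrix (Fin (K + 1)) (Fin (K + 1)) R) (i₀ : Fin (K + 1)) :
    nuLe (M i₀ 0 * sdet (M.submatrix i₀.succAbove Fin.succ)) (sdet M) := by
  have hsum : M i₀ 0 * sdet (M.submatrix i₀.succAbove Fin.succ) =
      ∑ τ ∈ univ.image (permExt i₀), ∏ i, M i (τ i) := by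
    rw [sum_image fun σ _ σ' _ h => permExt_injective i₀ h, sdet, mul_sum]
    simp only [prod_permExt]
  rw [hsum]
  exact nuLe_sum_of_subset (subset_univ _)

theorem prod_nuLe_prod_mul_swap {N : ℕ} (M : Matrix (Fin N) (Fin N) R) (τ : Equiv.Perm (Fin N))
    {x y : Fin N} (hxy : nuLe (M x (τ x) * M y (τ y)) (M x (τ y) * M y (τ x))) :
    nuLe (∏ i, M i (τ i)) (∏ i, M i ((τ * Equiv.swap x y) i)) := by
  classical
  rcases eq_or_ne x y with rfl | hne
  · simpa using nuLe_refl (∏ i, M i (τ i))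
  have hsplit : ∀ g : Equiv.Perm (Fin N), ∏ i, M i (g i) =
      M x (g x) * M y (g y) * ∏ i ∈ (univ.erase x).erase y, M i (g i) := fun g => by
    rw [mul_assoc, mul_prod_erase (univ.erase x) (fun i => M i (g i))
      (mem_erase.2 ⟨hne.symm, mem_univ y⟩),
      mul_prod_erase univ (fun i => M i (g i)) (mem_univ x)]
  rw [hsplit, hsplit, Equiv.Perm.mul_apply, Equiv.swap_apply_left, Equiv.Perm.mul_apply,
    Equiv.swap_apply_right]
  refine (hxy.mul_right _).trans_eq (congrArg nu (congrArg _ (prod_congr rfl fun i hi => ?_)))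
  rw [Equiv.Perm.mul_apply, Equiv.swap_apply_of_ne_of_ne (ne_of_mem_erase (mem_of_mem_erase hi))
    (ne_of_mem_erase hi)]

end Permanent

section Sylvester

variable {R : Type*} [CommSemiring R]

theorem sdet_eq_permanent {k : ℕ} (M : Matrix (Fin k) (Fin k) R) : sdet M = M.permanent := by
  rw [← Matrix.permanent_transpose]
  rfl

/-- A generalization of `resMatrix` (see `Res_eq_sdet_shiftedSylvester`) whose shape survives
deleting the first column together with the leading row of either block. -/
def shiftedSylvester (q s t N : ℕ) (a b : ℕ → R) : Matrix (Fin N) (Fin N) R := fun i j =>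
  if (i : ℕ) < q then
    (if (i : ℕ) ≤ (j : ℕ) + s then a ((j : ℕ) + s - (i : ℕ)) else 0)
  else
    (if (i : ℕ) - q ≤ (j : ℕ) + t then b ((j : ℕ) + t - ((i : ℕ) - q)) else 0)

/-- The sum over all interleavings of `q` steps of type `a` and `r` steps of type `b`, where an
`a`-step contributes `a (s + #earlier b-steps)` and a `b`-step `b (t + #earlier a-steps)`. -/
def pathSum (a b : ℕ → R) : ℕ → ℕ → ℕ → ℕ → R
  | 0, 0, _, _ => 1
  | q + 1, 0, s, t => a s * pathSum a b q 0 s (t + 1)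
  | 0, r + 1, s, t => b t * pathSum a b 0 r (s + 1) t
  | q + 1, r + 1, s, t =>
      a s * pathSum a b q (r + 1) s (t + 1) + b t * pathSum a b (q + 1) r (s + 1) t
  termination_by q r => q + r

variable {a b : ℕ → R} {q s t N K : ℕ}

theorem Res_eq_sdet_shiftedSylvester (f g : R[X]) :
    Res f g = sdet (shiftedSylvester g.natDegree 0 0 (f.natDegree + g.natDegree) f.coeff g.coeff) :=
  rfl

theorem pathSum_zero_left (r s t : ℕ) : pathSum a b 0 r s t = b t ^ r := by
  induction r generalizing s with
  | zero => simp [pathSum]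
  | succ r ih => rw [pathSum, ih, pow_succ, mul_comm]

theorem pathSum_zero_right (q s t : ℕ) : pathSum a b q 0 s t = a s ^ q := by
  induction q generalizing t with
  | zero => simp [pathSum]
  | succ q ih => rw [pathSum, ih, pow_succ, mul_comm]

theorem shiftedSylvester_of_lt {i j : Fin N} (hi : (i : ℕ) < q) (hij : (i : ℕ) ≤ j + s) :
    shiftedSylvester q s t N a b i j = a (j + s - i) := by
  simp [shiftedSylvester, hi, hij]

theorem shiftedSylvester_of_le {i j : Fin N} (hi : q ≤ (i : ℕ))
    (hij : (i : ℕ) - q ≤ j + t) :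
    shiftedSylvester q s t N a b i j = b (j + t - (i - q)) := by
  simp [shiftedSylvester, hij, not_lt.2 hi]

theorem shiftedSylvester_zero_zero : shiftedSylvester (q + 1) s t (K + 1) a b 0 0 = a s := by
  simp [shiftedSylvester]

theorem shiftedSylvester_mk_zero (hq : q < K + 1) :
    shiftedSylvester q s t (K + 1) a b ⟨q, hq⟩ 0 = b t := by
  simp [shiftedSylvester]

theorem shiftedSylvester_submatrix_zero :
    (shiftedSylvester (q + 1) s t (K + 1) a b).submatrix (Fin.succAbove 0) Fin.succ =
      shiftedSylvester q s (t + 1) K a b := by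
  ext i j
  simp only [Fin.succAbove_zero, Matrix.submatrix_apply, shiftedSylvester, Fin.val_succ]
  split_ifs <;> first | rfl | (congr 1; omega)

theorem shiftedSylvester_submatrix_of_lt (hq : q < K + 1) :
    (shiftedSylvester q s t (K + 1) a b).submatrix (Fin.succAbove ⟨q, hq⟩) Fin.succ =
      shiftedSylvester q (s + 1) t K a b := by
  ext i j
  have hi : ((⟨q, hq⟩ : Fin (K + 1)).succAbove i : ℕ) =
      if (i : ℕ) < q then (i : ℕ) else (i : ℕ) + 1 := by
    unfold Fin.succAbove
    split_ifs <;> simp only [Fin.lt_def, Fin.val_castSucc, Fin.val_succ] at * <;> omega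
  simp only [Matrix.submatrix_apply, shiftedSylvester, Fin.val_succ, hi]
  split_ifs <;> first | rfl | (congr 1; omega)

end Sylvester

section SylvesterLowerBound

variable {R : Type*} [Supertropical R] {a b : ℕ → R} {q s t K : ℕ}

theorem nuLe_pathSum_succ_left (r : ℕ) :
    nuLe (a s * pathSum a b q r s (t + 1)) (pathSum a b (q + 1) r s t) := by
  cases r with
  | zero => rw [pathSum]; exact nuLe_refl _
  | succ r => rw [pathSum]; exact nuLe_add_left _ _

theorem nuLe_pathSum_succ_right (r : ℕ) :
    nuLe (b t * pathSum a b q r (s + 1) t) (pathSum a b q (r + 1) s t) := by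
  cases q with
  | zero => rw [pathSum]; exact nuLe_refl _
  | succ q => rw [pathSum]; exact nuLe_add_right _ _

theorem mul_sdet_nuLe_sdet_succ_left :
    nuLe (a s * sdet (shiftedSylvester q s (t + 1) K a b))
      (sdet (shiftedSylvester (q + 1) s t (K + 1) a b)) := by
  simpa only [shiftedSylvester_submatrix_zero, shiftedSylvester_zero_zero] using
    mul_sdet_submatrix_nuLe (shiftedSylvester (q + 1) s t (K + 1) a b) 0

theorem mul_sdet_nuLe_sdet_succ_right (hq : q < K + 1) :
    nuLe (b t * sdet (shiftedSylvester q (s + 1) t K a b))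
      (sdet (shiftedSylvester q s t (K + 1) a b)) := by
  simpa only [shiftedSylvester_submatrix_of_lt hq, shiftedSylvester_mk_zero hq] using
    mul_sdet_submatrix_nuLe (shiftedSylvester q s t (K + 1) a b) ⟨q, hq⟩

theorem pathSum_nuLe_sdet (a b : ℕ → R) :
    ∀ {N q r : ℕ} (s t : ℕ), q + r = N →
      nuLe (pathSum a b q r s t) (sdet (shiftedSylvester q s t N a b))
  | 0, 0, 0, _, _, _ => by
    rw [pathSum, sdet_eq_permanent, Matrix.permanent_isEmpty]
    exact nuLe_refl 1
  | 0, _ + 1, _, _, _, hqr | 0, 0, _ + 1, _, _, hqr | _ + 1, 0, 0, _, _, hqr => by omega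
  | K + 1, q + 1, 0, s, t, hqr => by
    rw [pathSum]
    exact ((pathSum_nuLe_sdet a b s (t + 1) (by omega)).mul_left _).trans
      mul_sdet_nuLe_sdet_succ_left
  | K + 1, 0, r + 1, s, t, hqr => by
    rw [pathSum]
    exact ((pathSum_nuLe_sdet a b (s + 1) t (by omega)).mul_left _).trans
      (mul_sdet_nuLe_sdet_succ_right (by omega))
  | K + 1, q + 1, r + 1, s, t, hqr => by
    rw [pathSum]
    exact (((pathSum_nuLe_sdet a b s (t + 1) (by omega)).mul_left _).trans
      mul_sdet_nuLe_sdet_succ_left).add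
      (((pathSum_nuLe_sdet a b (s + 1) t (by omega)).mul_left _).trans
        (mul_sdet_nuLe_sdet_succ_right (by omega)))

end SylvesterLowerBound

section SylvesterUpperBound

variable {F : Type*} [STSemifield F] {a b : ℕ → F} {ma mb q s t K : ℕ}

theorem IsFullSeq.exchange_shift (h : IsFullSeq a ma) {d s : ℕ} (c : ℕ) (hd : d ≤ s) :
    nuLe (a (c + s) * a (s - d)) (a s * a (c + s - d)) := by
  rw [mul_comm]
  exact h.exchange (by omega) (by omega) (by omega) (by omega) (by omega)

/-- If column `0` is taken by a row `ρ` of the `a`-block, exchanging the columns of rows `0`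
and `ρ` does not lower the term, by log-concavity of `a`; the new term runs through the entry
`(0, 0)`. -/
theorem prod_nuLe_mul_sdet_left (ha : IsFullSeq a ma) (τ : Equiv.Perm (Fin (K + 1)))
    (hρ : (τ.symm 0 : ℕ) < q + 1)
    (hne : shiftedSylvester (q + 1) s t (K + 1) a b (τ.symm 0) 0 ≠ 0) :
    nuLe (∏ i, shiftedSylvester (q + 1) s t (K + 1) a b i (τ i))
      (a s * sdet (shiftedSylvester q s (t + 1) K a b)) := by
  set M := shiftedSylvester (q + 1) s t (K + 1) a b
  set ρ := τ.symm 0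
  have hτρ : τ ρ = 0 := τ.apply_symm_apply 0
  have hρs : (ρ : ℕ) ≤ s := by
    by_contra h
    exact hne (by simp [M, shiftedSylvester, hρ, h])
  have hswap : nuLe (M 0 (τ 0) * M ρ (τ ρ)) (M 0 (τ ρ) * M ρ (τ 0)) := by
    rw [hτρ]
    simp only [M]
    rw [shiftedSylvester_zero_zero, shiftedSylvester_of_lt (by simp) (by simp),
      shiftedSylvester_of_lt hρ (by simpa using hρs), shiftedSylvester_of_lt hρ (by omega)]
    simpa using ha.exchange_shift (τ 0 : ℕ) hρs
  have hτ' : (τ * Equiv.swap 0 ρ) 0 = 0 := by simp [hτρ]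
  refine (prod_nuLe_prod_mul_swap M τ hswap).trans ?_
  simpa only [M, shiftedSylvester_submatrix_zero, shiftedSylvester_zero_zero] using
    nuLe_sdet_of_apply_eq_zero M hτ'

theorem prod_nuLe_mul_sdet_right (hb : IsFullSeq b mb) (τ : Equiv.Perm (Fin (K + 1)))
    (hq : q < K + 1) (hρ : q ≤ (τ.symm 0 : ℕ))
    (hne : shiftedSylvester q s t (K + 1) a b (τ.symm 0) 0 ≠ 0) :
    nuLe (∏ i, shiftedSylvester q s t (K + 1) a b i (τ i))
      (b t * sdet (shiftedSylvester q (s + 1) t K a b)) := by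
  set M := shiftedSylvester q s t (K + 1) a b
  set ρ := τ.symm 0
  set i₀ : Fin (K + 1) := ⟨q, hq⟩
  have hτρ : τ ρ = 0 := τ.apply_symm_apply 0
  have hρt : (ρ : ℕ) - q ≤ t := by
    by_contra h
    exact hne (by simp [M, shiftedSylvester, not_lt.2 hρ, h])
  have hswap : nuLe (M i₀ (τ i₀) * M ρ (τ ρ)) (M i₀ (τ ρ) * M ρ (τ i₀)) := by
    rw [hτρ]
    simp only [M, i₀]
    rw [shiftedSylvester_mk_zero hq, shiftedSylvester_of_le (le_refl q) (by simp),
      shiftedSylvester_of_le hρ (by simpa using hρt), shiftedSylvester_of_le hρ (by omega)]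
    simpa [i₀] using hb.exchange_shift (τ i₀ : ℕ) hρt
  have hτ' : (τ * Equiv.swap i₀ ρ) i₀ = 0 := by simp [hτρ]
  refine (prod_nuLe_prod_mul_swap M τ hswap).trans ?_
  simpa only [M, i₀, shiftedSylvester_submatrix_of_lt hq, shiftedSylvester_mk_zero hq] using
    nuLe_sdet_of_apply_eq_zero M hτ'

theorem sdet_nuLe_pathSum (ha : IsFullSeq a ma) (hb : IsFullSeq b mb) :
    ∀ {N q r : ℕ} (s t : ℕ), q + r = N →
      nuLe (sdet (shiftedSylvester q s t N a b)) (pathSum a b q r s t)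
  | 0, 0, 0, _, _, _ => by
    rw [pathSum, sdet_eq_permanent, Matrix.permanent_isEmpty]
    exact nuLe_refl 1
  | 0, _ + 1, _, _, _, hqr | 0, 0, _ + 1, _, _, hqr => by omega
  | K + 1, q, r, s, t, hqr => by
    refine sum_nuLe fun τ _ => ?_
    by_cases hz : shiftedSylvester q s t (K + 1) a b (τ.symm 0) 0 = 0
    · rw [Finset.prod_eq_zero (Finset.mem_univ (τ.symm 0)) (by simpa using hz)]
      exact zero_nuLe _
    rcases lt_or_ge (τ.symm 0 : ℕ) q with hρ | hρ
    · obtain ⟨q, rfl⟩ : ∃ q', q = q' + 1 := ⟨q - 1, by omega⟩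
      exact (prod_nuLe_mul_sdet_left ha τ hρ hz).trans
        (((sdet_nuLe_pathSum ha hb s (t + 1) (by omega)).mul_left _).trans
          (nuLe_pathSum_succ_left r))
    · obtain ⟨r, rfl⟩ : ∃ r', r = r' + 1 := ⟨r - 1, by omega⟩
      exact (prod_nuLe_mul_sdet_right hb τ (by omega) hρ hz).trans
        (((sdet_nuLe_pathSum ha hb (s + 1) t (by omega)).mul_left _).trans
          (nuLe_pathSum_succ_right r))

theorem nu_sdet_shiftedSylvester (ha : IsFullSeq a ma) (hb : IsFullSeq b mb) {N q r : ℕ}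
    (hN : q + r = N) : nu (sdet (shiftedSylvester q s t N a b)) = nu (pathSum a b q r s t) :=
  nuLe_antisymm (sdet_nuLe_pathSum ha hb s t hN) (pathSum_nuLe_sdet a b s t hN)

end SylvesterUpperBound

theorem prod_range_succ_add {M : Type*} [CommMonoid M] (f : ℕ → M) (n t : ℕ) :
    ∏ k ∈ range (n + 1), f (t + k) = f t * ∏ k ∈ range n, f (t + 1 + k) := by
  rw [prod_range_succ', add_zero, mul_comm]
  congr 1
  exact prod_congr rfl fun k _ => by rw [add_assoc, add_comm 1 k]

theorem mul_prod_range_add_one {M : Type*} [CommMonoid M] (f : ℕ → M) (n t : ℕ) :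
    f t * ∏ k ∈ range n, f (t + 1 + k) = (∏ k ∈ range n, f (t + k)) * f (t + n) := by
  rw [← prod_range_succ_add, prod_range_succ]

section HomEval

variable {R : Type*} [CommSemiring R]

/-- The homogenization of `∑_{σ ≤ r} a (s + σ) λ^σ`, evaluated at `(x, y)`; for invertible
`y` it is `y ^ r` times the value at `x / y`. -/
def homEval (a : ℕ → R) (r s : ℕ) (x y : R) : R :=
  ∑ σ ∈ range (r + 1), a (s + σ) * (x ^ σ * y ^ (r - σ))

variable {a : ℕ → R} {r s : ℕ} {x y : R}

theorem homEval_zero : homEval a 0 s x y = a s := by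
  simp [homEval]

theorem homEval_succ :
    homEval a (r + 1) s x y = a s * y ^ (r + 1) + x * homEval a r (s + 1) x y := by
  rw [homEval, sum_range_succ', add_comm, homEval, mul_sum]
  simp only [add_zero, pow_zero, one_mul, Nat.sub_zero]
  congr 1
  refine sum_congr rfl fun σ hσ => ?_
  rw [show s + (σ + 1) = s + 1 + σ by omega, show r + 1 - (σ + 1) = r - σ by omega, pow_succ]
  ring

theorem homEval_mul_mul (c : R) : homEval a r s (c * x) (c * y) = c ^ r * homEval a r s x y := by
  rw [homEval, homEval, mul_sum]
  refine sum_congr rfl fun σ hσ => ?_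
  obtain ⟨d, rfl⟩ : ∃ d, r = σ + d := ⟨r - σ, by have := mem_range.1 hσ; omega⟩
  rw [Nat.add_sub_cancel_left, mul_pow, mul_pow, pow_add]
  ring

end HomEval

section PathSumFormula

variable {R : Type*} [Supertropical R] {a b : ℕ → R}

theorem nu_homEval_congr {r s : ℕ} {x y x' y' : R} (hx : nu x = nu x') (hy : nu y = nu y') :
    nu (homEval a r s x y) = nu (homEval a r s x' y') :=
  nu_sum_congr fun _ _ => nu_mul_congr rfl (nu_mul_congr (nu_pow_congr hx _) (nu_pow_congr hy _))

theorem homEval_exchange (r s : ℕ) {x y z : R} (h : nuLe (x * z) (y * y)) :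
    nuLe (x * homEval a r s x y * z ^ (r + 1)) (y ^ (r + 1) * (y * homEval a r s y z)) := by
  simp only [homEval, mul_sum, sum_mul]
  refine sum_nuLe_sum fun σ hσ => ?_
  obtain ⟨d, rfl⟩ : ∃ d, r = σ + d := ⟨r - σ, by have := mem_range.1 hσ; omega⟩
  rw [Nat.add_sub_cancel_left]
  convert (h.pow (σ + 1)).mul_left (a (s + σ) * y ^ d * z ^ d) using 1 <;> ring

theorem nuLe_mul_prod_add {A S : ℕ → R} (hAS : ∀ u, nuLe (S u * A (u + 1)) (A u * S (u + 1)))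
    (q t : ℕ) :
    nuLe (S t * ∏ k ∈ range q, (A (t + 1 + k) + S (t + 1 + k)))
      (A t * ∏ k ∈ range q, (A (t + 1 + k) + S (t + 1 + k)) +
        ∏ k ∈ range (q + 1), S (t + k)) := by
  induction q generalizing t with
  | zero => simpa using nuLe_add_right (A t) (S t)
  | succ q ih =>
    rw [prod_range_succ_add (fun u => A u + S u), prod_range_succ_add S (q + 1)]
    set Q := ∏ k ∈ range q, (A (t + 1 + 1 + k) + S (t + 1 + 1 + k))
    have hmixed : nuLe (S t * A (t + 1) * Q) (A t * ((A (t + 1) + S (t + 1)) * Q)) := by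
      rw [← mul_assoc]
      exact ((hAS t).trans ((nuLe_add_right _ _).mul_left _)).mul_right Q
    have hRHS := nuLe_add_left (A t * ((A (t + 1) + S (t + 1)) * Q))
      (S t * ∏ k ∈ range (q + 1), S (t + 1 + k))
    rw [show S t * ((A (t + 1) + S (t + 1)) * Q) = S t * A (t + 1) * Q + S t * (S (t + 1) * Q) by
      ring]
    refine (hmixed.trans hRHS).add ?_
    refine ((ih (t + 1)).mul_left (S t)).trans ?_
    rw [mul_add, ← mul_assoc]
    exact (hmixed.trans hRHS).add (nuLe_add_right _ _)

/-- Under the exchange condition, the terms of `∏ (A + S)` that start with `S t` are dominated,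
apart from `∏ S`, by those that start with `A t`. -/
theorem nu_prod_add_eq {A S : ℕ → R} (hAS : ∀ u, nuLe (S u * A (u + 1)) (A u * S (u + 1)))
    (q t : ℕ) :
    nu (∏ k ∈ range (q + 1), (A (t + k) + S (t + k))) =
      nu (A t * ∏ k ∈ range q, (A (t + 1 + k) + S (t + 1 + k)) +
        ∏ k ∈ range (q + 1), S (t + k)) := by
  rw [prod_range_succ_add (fun u => A u + S u), add_mul]
  refine nu_add_eq_nu_add ?_ (nuLe_mul_prod_add hAS q t)
  rw [prod_range_succ_add S]
  exact (prod_nuLe_prod fun k _ => nuLe_add_right _ _).mul_left _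

/-- Up to `ν` and normalization, `pathSum a b q r s t` is the product of the values of
`∑_{σ ≤ r} a (s + σ) λ^σ` at the ratios `b u / b (u + 1)`, `t ≤ u < t + q`. -/
theorem nu_pathSum_mul_prod (hb : ∀ u, nuLe (b u * b (u + 2)) (b (u + 1) * b (u + 1)))
    (q r s t : ℕ) :
    nu (pathSum a b q r s t * ∏ k ∈ range q, b (t + 1 + k) ^ r) =
      nu (b (t + q) ^ r * ∏ k ∈ range q, homEval a r s (b (t + k)) (b (t + k + 1))) := by
  induction q generalizing r s t with
  | zero => simp [pathSum_zero_left]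
  | succ q ihq =>
  induction r generalizing s t with
  | zero => simp [pathSum_zero_right, homEval_zero]
  | succ r ihr =>
  let A u := a s * b (u + 1) ^ (r + 1)
  let S u := b u * homEval a r (s + 1) (b u) (b (u + 1))
  let H u := homEval a (r + 1) s (b u) (b (u + 1))
  have hH : ∀ u, H u = A u + S u := fun u => homEval_succ
  let B := b (t + (q + 1)) ^ (r + 1)
  let Q := ∏ k ∈ range q, H (t + 1 + k)
  -- the two branches of the recursion give the two summands on the right of `nu_prod_add_eq`
  have hX : nu (a s * pathSum a b q (r + 1) s (t + 1) *
      ∏ k ∈ range (q + 1), b (t + 1 + k) ^ (r + 1)) = nu (B * (A t * Q)) := by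
    have h := ihq (r + 1) s (t + 1)
    rw [show t + 1 + q = t + (q + 1) by omega] at h
    rw [prod_range_succ_add (fun u => b u ^ (r + 1)),
      show ∀ x y z w : R, x * y * (z * w) = (x * z) * (y * w) from fun _ _ _ _ => by ring,
      nu_mul_congr rfl h]
    exact congrArg nu (by ring)
  have hZ : nu (b t * pathSum a b (q + 1) r (s + 1) t *
      ∏ k ∈ range (q + 1), b (t + 1 + k) ^ (r + 1)) =
        nu (B * ∏ k ∈ range (q + 1), S (t + k)) := by
    have h := ihr (s + 1) t
    simp only [pow_succ, prod_mul_distrib]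
    rw [show ∀ x y z w : R, x * y * (z * w) = (x * w) * (y * z) from fun _ _ _ _ => by ring,
      nu_mul_congr rfl h, mul_prod_range_add_one b]
    exact congrArg nu (by simp only [S, B, prod_mul_distrib, pow_succ]; ring)
  have hAS : ∀ u, nuLe (S u * A (u + 1)) (A u * S (u + 1)) := fun u => by
    convert (homEval_exchange (a := a) r (s + 1) (hb u)).mul_left (a s) using 1 <;> ring
  rw [pathSum, add_mul, nu_add_congr hX hZ, ← mul_add, nu_mul, nu_mul]
  congr 1
  simp only [Q, H, hH]
  exact (nu_prod_add_eq hAS q t).symm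

end PathSumFormula

section CauchyProduct

variable {R : Type*} [CommSemiring R]

def cauchyProduct (B C : ℕ → R) (k : ℕ) : R := ∑ i ∈ range (k + 1), B i * C (k - i)

variable {B C : ℕ → R}

theorem coeff_mul_eq_cauchyProduct (f g : R[X]) : (f * g).coeff = cauchyProduct f.coeff g.coeff :=
  funext fun k => by rw [coeff_mul, Nat.sum_antidiagonal_eq_sum_range_succ_mk]; rfl

theorem cauchyProduct_comm : cauchyProduct B C = cauchyProduct C B := by
  ext k
  rw [cauchyProduct, cauchyProduct, ← sum_range_reflect]
  refine sum_congr rfl fun i hi => ?_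
  rw [mul_comm, show k + 1 - 1 - i = k - i by omega,
    Nat.sub_sub_self (by have := mem_range.1 hi; omega)]

theorem cauchyProduct_zero : cauchyProduct B C 0 = B 0 * C 0 := by
  simp [cauchyProduct]

theorem cauchyProduct_succ (k : ℕ) :
    cauchyProduct B C (k + 1) = cauchyProduct (fun i => B (i + 1)) C k + B 0 * C (k + 1) := by
  rw [cauchyProduct, sum_range_succ', cauchyProduct]
  congr 1
  exact sum_congr rfl fun i _ => by rw [Nat.add_sub_add_right]

theorem cauchyProduct_of_eq_zero (hB : ∀ i, 0 < i → B i = 0) (k : ℕ) :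
    cauchyProduct B C k = B 0 * C k := by
  rw [cauchyProduct, sum_eq_single 0 (fun i _ hi => by rw [hB i (by omega), zero_mul])
    (fun h => absurd (mem_range.2 k.succ_pos) h), Nat.sub_zero]

end CauchyProduct

section CauchyProductFull

variable {F : Type*} [STSemifield F] {B C : ℕ → F} {n p : ℕ}

theorem nuLe_cauchyProduct {i k : ℕ} (hi : i ≤ k) :
    nuLe (B i * C (k - i)) (cauchyProduct B C k) :=
  nuLe_sum (f := fun i => B i * C (k - i)) (mem_range.2 (by omega))

theorem IsFullSeq.cauchyProduct_add (hB : IsFullSeq B n) (hC : IsFullSeq C p) :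
    cauchyProduct B C (n + p) = B n * C p := by
  rw [cauchyProduct, sum_eq_single n, Nat.add_sub_cancel_left]
  · intro i _ hin
    rcases lt_or_gt_of_ne hin with h | h
    · rw [hC.eq_zero _ (by omega), mul_zero]
    · rw [hB.eq_zero _ h, zero_mul]
  · exact fun h => absurd (mem_range.2 (by omega)) h

/-- For log-concavity of `D = cauchyProduct B C`, each term
`B i * C (k - i) * (B j * C (k + 2 - j))` of `D k * D (k + 2)` is dominated by a term of
`D (k + 1) ^ 2`: move `i` or `j` one step towards the other, using the log-concavity of `C` if
`j ≤ i` and that of `B` if `i < j`. -/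
theorem IsFullSeq.cauchyProduct (hB : IsFullSeq B n) (hC : IsFullSeq C p) :
    IsFullSeq (Supertropical.cauchyProduct B C) (n + p) where
  ne_zero k hk := ne_zero_of_nuLe (nuLe_cauchyProduct (min_le_left k n))
    (mul_ne_zero (hB.ne_zero _ (min_le_right k n)) (hC.ne_zero _ (by omega)))
  eq_zero k hk := sum_eq_zero fun i hi => by
    rcases le_or_gt i n with h | h
    · rw [hC.eq_zero _ (by omega), mul_zero]
    · rw [hB.eq_zero _ h, zero_mul]
  logConcave k := by
    set D := Supertropical.cauchyProduct B C
    have hterm : ∀ i j i' j', i' ≤ k + 1 → j' ≤ k + 1 →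
        nuLe (B i * B j * (C (k - i) * C (k + 2 - j)))
          (B i' * B j' * (C (k + 1 - i') * C (k + 1 - j'))) →
        nuLe (B i * C (k - i) * (B j * C (k + 2 - j))) (D (k + 1) * D (k + 1)) :=
      fun i j i' j' hi hj h =>
        ((nuLe_of_nu_eq (congrArg nu (by ring))).trans h).trans
          ((nuLe_of_nu_eq (congrArg nu (by ring))).trans
            ((nuLe_cauchyProduct hi).mul (nuLe_cauchyProduct hj)))
    rw [show D k * D (k + 2) = _ from sum_mul_sum _ _ _ _]
    refine sum_nuLe fun i hi => sum_nuLe fun j hj => ?_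
    rw [mem_range] at hi hj
    rcases le_or_gt j i with hji | hij
    · exact hterm i j i j (by omega) (by omega)
        ((hC.exchange (by omega) (by omega) (by omega) (by omega) (by omega)).mul_left _)
    · refine hterm i j (i + 1) (j - 1) (by omega) (by omega) ?_
      rw [show k + 1 - (i + 1) = k - i by omega, show k + 1 - (j - 1) = k + 2 - j by omega]
      exact (hB.exchange (by omega) (by omega) (by omega) (by omega) (by omega)).mul_right _

/-- When `B 0 / B 1` is the smaller of the ratios `B 0 / B 1` and `C 0 / C 1`, dropping `B 0`
does not change the `ν`-values of the higher coefficients of the product. -/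
theorem nu_cauchyProduct_succ (hC : IsFullSeq C p) (hp : 1 ≤ p)
    (hBC : nuLe (B 0 * C 1) (B 1 * C 0)) (k : ℕ) :
    nu (cauchyProduct B C (k + 1)) = nu (cauchyProduct (fun i => B (i + 1)) C k) := by
  rw [cauchyProduct_succ, add_comm, nu_add_of_nuLe]
  refine nuLe.trans ?_ (nuLe_cauchyProduct (B := fun i => B (i + 1)) (Nat.zero_le k))
  by_cases hk : p < k + 1
  · rw [hC.eq_zero _ hk, mul_zero]
    exact zero_nuLe _
  simp only [zero_add, Nat.sub_zero]
  refine nuLe.of_mul_right (mul_ne_zero (hC.ne_zero 0 (by omega)) (hC.ne_zero 1 hp)) ?_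
  have := hBC.mul (hC.exchange (x := 0) (y := k + 1) (x' := 1) (y' := k) (by omega) (by omega)
    (by omega) (by omega) (by omega))
  convert this using 1 <;> ring

end CauchyProductFull

section HomEvalProd

variable {R : Type*} [CommSemiring R]

/-- For a full sequence `B` of degree `n` this is `(∏_{k<n} B (k + 1)) ^ m` times the product of
the values of `∑_{σ ≤ m} a σ λ^σ` at the roots `B k / B (k + 1)` of `B`. -/
def homEvalProd (a : ℕ → R) (m : ℕ) (B : ℕ → R) (n : ℕ) : R :=
  ∏ k ∈ range n, homEval a m 0 (B k) (B (k + 1))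

variable {a B : ℕ → R} {m n : ℕ}

theorem homEvalProd_succ :
    homEvalProd a m B (n + 1) =
      homEval a m 0 (B 0) (B 1) * homEvalProd a m (fun i => B (i + 1)) n := by
  rw [homEvalProd, prod_range_succ', mul_comm]
  rfl

end HomEvalProd

section Merge

variable {F : Type*} [STSemifield F] {a B C : ℕ → F} {m n p : ℕ}

theorem homEvalProd_cauchyProduct_of_degree_zero (hB : IsFullSeq B 0) :
    homEvalProd a m (cauchyProduct B C) (0 + p) *
        ((∏ k ∈ range 0, B (k + 1)) * ∏ k ∈ range p, C (k + 1)) ^ m =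
      homEvalProd a m B 0 * homEvalProd a m C p *
        (∏ k ∈ range (0 + p), cauchyProduct B C (k + 1)) ^ m := by
  have hD := cauchyProduct_of_eq_zero (C := C) hB.eq_zero
  simp only [homEvalProd, hD, homEval_mul_mul, prod_mul_distrib, prod_const, card_range,
    zero_add, prod_range_zero, one_mul, mul_pow, ← pow_mul]
  ring

theorem nu_homEvalProd_cauchyProduct_comm
    (h : nu (homEvalProd a m (cauchyProduct B C) (n + p) *
        ((∏ k ∈ range n, B (k + 1)) * ∏ k ∈ range p, C (k + 1)) ^ m) =
      nu (homEvalProd a m B n * homEvalProd a m C p *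
        (∏ k ∈ range (n + p), cauchyProduct B C (k + 1)) ^ m)) :
    nu (homEvalProd a m (cauchyProduct C B) (p + n) *
        ((∏ k ∈ range p, C (k + 1)) * ∏ k ∈ range n, B (k + 1)) ^ m) =
      nu (homEvalProd a m C p * homEvalProd a m B n *
        (∏ k ∈ range (p + n), cauchyProduct C B (k + 1)) ^ m) := by
  rw [cauchyProduct_comm, add_comm p n, mul_comm (∏ k ∈ range p, C (k + 1)),
    mul_comm (homEvalProd a m C p)]
  exact h

theorem nu_homEvalProd_cauchyProduct_of_nuLe (hC : IsFullSeq C p) (hp : 1 ≤ p)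
    (hBC : nuLe (B 0 * C 1) (B 1 * C 0)) (N : ℕ) :
    nu (homEvalProd a m (cauchyProduct B C) (N + 1)) =
      nu (C 0 ^ m * homEval a m 0 (B 0) (B 1) *
        homEvalProd a m (cauchyProduct (fun i => B (i + 1)) C) N) := by
  have hD := nu_cauchyProduct_succ hC hp hBC
  rw [homEvalProd_succ, ← homEval_mul_mul]
  refine nu_mul_congr (nu_homEval_congr ?_ ?_) ?_
  · rw [cauchyProduct_zero, mul_comm]
  · rw [hD 0, cauchyProduct_zero, mul_comm]
  · exact nu_prod_congr fun k _ => nu_homEval_congr (hD k) (hD (k + 1))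

theorem nu_prod_cauchyProduct_of_nuLe (hC : IsFullSeq C p) (hp : 1 ≤ p)
    (hBC : nuLe (B 0 * C 1) (B 1 * C 0)) (N : ℕ) :
    nu (∏ k ∈ range (N + 1), cauchyProduct B C (k + 1)) =
      nu ((∏ k ∈ range N, cauchyProduct (fun i => B (i + 1)) C (k + 1)) * (C 0 * B 1)) := by
  have hD := nu_cauchyProduct_succ hC hp hBC
  rw [prod_range_succ']
  refine nu_mul_congr (nu_prod_congr fun k _ => hD (k + 1)) ?_
  rw [hD 0, cauchyProduct_zero, mul_comm]

/-- Peeling off the root `B 0 / B 1` when it is the smallest root of `B * C`. -/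
theorem nu_homEvalProd_cauchyProduct_succ (hC : IsFullSeq C p) (hp : 1 ≤ p)
    (hBC : nuLe (B 0 * C 1) (B 1 * C 0))
    (ih : nu (homEvalProd a m (cauchyProduct (fun i => B (i + 1)) C) (n + p) *
        ((∏ k ∈ range n, B (k + 1 + 1)) * ∏ k ∈ range p, C (k + 1)) ^ m) =
      nu (homEvalProd a m (fun i => B (i + 1)) n * homEvalProd a m C p *
        (∏ k ∈ range (n + p), cauchyProduct (fun i => B (i + 1)) C (k + 1)) ^ m)) :
    nu (homEvalProd a m (cauchyProduct B C) (n + 1 + p) *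
        ((∏ k ∈ range (n + 1), B (k + 1)) * ∏ k ∈ range p, C (k + 1)) ^ m) =
      nu (homEvalProd a m B (n + 1) * homEvalProd a m C p *
        (∏ k ∈ range (n + 1 + p), cauchyProduct B C (k + 1)) ^ m) := by
  have hT := nu_homEvalProd_cauchyProduct_of_nuLe (a := a) (m := m) hC hp hBC (n + p)
  have hW := nu_pow_congr (nu_prod_cauchyProduct_of_nuLe hC hp hBC (n + p)) m
  rw [show n + 1 + p = n + p + 1 by omega, prod_range_succ' (fun k => B (k + 1)),
    homEvalProd_succ (B := B)]
  simp only [nu_mul, mul_pow, zero_add] at hT hW ih ⊢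
  rw [hT, hW]
  generalize nu ((∏ k ∈ range n, B (k + 1 + 1)) ^ m) = wB,
    nu ((∏ k ∈ range p, C (k + 1)) ^ m) = wC at ih ⊢
  calc _ = nu (C 0 ^ m) * nu (homEval a m 0 (B 0) (B 1)) * nu (B 1 ^ m) *
        (nu (homEvalProd a m (cauchyProduct (fun i => B (i + 1)) C) (n + p)) * (wB * wC)) := by
        ring
    _ = _ := by
        rw [ih]
        ring

/-- The `ν`-roots of `B * C` are those of `B` together with those of `C`. -/
theorem nu_homEvalProd_cauchyProduct :
    ∀ {N n p : ℕ} {B C : ℕ → F}, n + p = N → IsFullSeq B n → IsFullSeq C p →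
      nu (homEvalProd a m (cauchyProduct B C) (n + p) *
          ((∏ k ∈ range n, B (k + 1)) * ∏ k ∈ range p, C (k + 1)) ^ m) =
        nu (homEvalProd a m B n * homEvalProd a m C p *
          (∏ k ∈ range (n + p), cauchyProduct B C (k + 1)) ^ m)
  | _, 0, _, _, _, _, hB, _ => congrArg nu (homEvalProd_cauchyProduct_of_degree_zero hB)
  | _, _ + 1, 0, _, _, _, _, hC =>
    nu_homEvalProd_cauchyProduct_comm (congrArg nu (homEvalProd_cauchyProduct_of_degree_zero hC))
  | N + 1, n + 1, p + 1, B, C, hN, hB, hC => by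
    rcases nuLe_total (B 0 * C 1) (B 1 * C 0) with hBC | hCB
    · exact nu_homEvalProd_cauchyProduct_succ hC (by omega) hBC
        (nu_homEvalProd_cauchyProduct (N := N) (by omega) (hB.shift (by omega)) hC)
    · refine nu_homEvalProd_cauchyProduct_comm (nu_homEvalProd_cauchyProduct_succ hB (by omega)
        ?_ (nu_homEvalProd_cauchyProduct (N := N) (by omega) (hC.shift (by omega)) hB))
      rw [mul_comm, mul_comm (C 1)]
      exact hCB

end Merge

section Resultant

variable {R : Type*} [CommSemiring R]

theorem sdet_submatrix_equiv {k l : ℕ} (M : Matrix (Fin k) (Fin k) R)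
    (e₁ e₂ : Fin l ≃ Fin k) :
    sdet (M.submatrix e₁ e₂) = sdet M := by
  obtain rfl : l = k := by simpa using Fintype.card_congr e₁
  rw [sdet_eq_permanent, sdet_eq_permanent,
    show M.submatrix e₁ e₂ = (M.submatrix e₁ id).submatrix id e₂ from rfl,
    Matrix.permanent_permute_rows, Matrix.permanent_permute_cols]

/-- The rotation of `Fin (n + m)` by `n`, which moves the first `m` rows of `resMatrix n m g f`
(the `g`-rows) behind its last `n` rows (the `f`-rows). -/
def finRotateAdd (n m : ℕ) : Fin (n + m) ≃ Fin (m + n) where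
  toFun i := ⟨if (i : ℕ) < m then i + n else i - m, by split_ifs <;> omega⟩
  invFun i := ⟨if (i : ℕ) < n then i + m else i - n, by split_ifs <;> omega⟩
  left_inv i := by ext; simp only; split_ifs <;> omega
  right_inv i := by ext; simp only; split_ifs <;> omega

theorem resultant_comm (m n : ℕ) (f g : R[X]) :
    _root_.resultant n m g f = _root_.resultant m n f g := by
  rw [_root_.resultant, _root_.resultant,
    ← sdet_submatrix_equiv _ (finRotateAdd n m) (finCongr (add_comm n m))]
  congr 1
  ext i j
  simp only [resMatrix, Matrix.submatrix_apply, finRotateAdd, Equiv.coe_fn_mk, finCongr_apply,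
    Fin.val_cast]
  split_ifs <;> first | rfl | omega | (congr 1; omega)

theorem Res_comm (f g : R[X]) : Res f g = Res g f :=
  (resultant_comm _ _ f g).symm

end Resultant

section FullPoly

variable {F : Type*} [STSemifield F] {f g h : F[X]}

theorem ne_zero_of_isFullSeq_coeff (hf : IsFullSeq f.coeff f.natDegree) : f ≠ 0 := fun h0 =>
  hf.ne_zero 0 (Nat.zero_le _) (by simp [h0])

theorem nu_Res_mul_prod (hf : IsFullSeq f.coeff f.natDegree) (hg : IsFullSeq g.coeff g.natDegree) :
    nu (Res f g * (∏ k ∈ range g.natDegree, g.coeff (k + 1)) ^ f.natDegree) =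
      nu (g.coeff g.natDegree ^ f.natDegree *
        homEvalProd f.coeff f.natDegree g.coeff g.natDegree) := by
  have hS : nu (Res f g) = nu (pathSum f.coeff g.coeff g.natDegree f.natDegree 0 0) := by
    rw [Res_eq_sdet_shiftedSylvester]
    exact nu_sdet_shiftedSylvester hf hg (by omega)
  have hP := nu_pathSum_mul_prod (a := f.coeff) hg.logConcave g.natDegree f.natDegree 0 0
  simp only [zero_add, add_comm 1] at hP
  rw [← prod_pow, nu_mul, hS, ← nu_mul, hP]
  rfl

theorem nu_Res_mul (hf : IsFullSeq f.coeff f.natDegree) (hg : IsFullSeq g.coeff g.natDegree)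
    (hh : IsFullSeq h.coeff h.natDegree) : nu (Res f (g * h)) = nu (Res f g * Res f h) := by
  have hdeg : (g * h).natDegree = g.natDegree + h.natDegree :=
    natDegree_mul (ne_zero_of_isFullSeq_coeff hg) (ne_zero_of_isFullSeq_coeff hh)
  have hcoeff := coeff_mul_eq_cauchyProduct g h
  have hD := hg.cauchyProduct hh
  have hgh := nu_Res_mul_prod hf (hcoeff ▸ hdeg ▸ hD)
  rw [hcoeff, hdeg, hg.cauchyProduct_add hh] at hgh
  have hfg := nu_Res_mul_prod hf hg
  have hfh := nu_Res_mul_prod hf hh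
  have hmerge := nu_homEvalProd_cauchyProduct (a := f.coeff) (m := f.natDegree) rfl hg hh
  set PB := ∏ k ∈ range g.natDegree, g.coeff (k + 1)
  set PC := ∏ k ∈ range h.natDegree, h.coeff (k + 1)
  set PD := ∏ k ∈ range (g.natDegree + h.natDegree), cauchyProduct g.coeff h.coeff (k + 1)
  have hne : ∀ {B : ℕ → F} {n : ℕ}, IsFullSeq B n → ∏ k ∈ range n, B (k + 1) ≠ 0 :=
    fun hB => prod_ne_zero_iff.2 fun k hk => hB.ne_zero _ (mem_range.1 hk)
  refine nu_eq_of_mul_right (c := PD ^ f.natDegree * (PB * PC) ^ f.natDegree)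
    (mul_ne_zero (pow_ne_zero _ (hne hD)) (pow_ne_zero _ (mul_ne_zero (hne hg) (hne hh)))) ?_
  simp only [nu_mul, mul_pow] at hgh hfg hfh hmerge ⊢
  generalize nu (PB ^ f.natDegree) = wB, nu (PC ^ f.natDegree) = wC,
    nu (PD ^ f.natDegree) = wD at *
  calc nu (Res f (g * h)) * (wD * (wB * wC))
      = (nu (Res f (g * h)) * wD) * (wB * wC) := by ring
    _ = nu (g.coeff g.natDegree ^ f.natDegree) * nu (h.coeff h.natDegree ^ f.natDegree) *
          (nu (homEvalProd f.coeff f.natDegree g.coeff g.natDegree) *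
            nu (homEvalProd f.coeff f.natDegree h.coeff h.natDegree) * wD) := by
        rw [hgh, mul_assoc, hmerge]
    _ = nu (Res f g) * nu (Res f h) * (wD * (wB * wC)) := by
        rw [show ∀ x y z w v : F, x * y * (z * w * v) = (x * z) * (y * w) * v by
          intros; ring, ← hfg, ← hfh]
        ring

end FullPoly

end Supertropical

theorem stmt12_general {F : Type*} [STSemifield F] (f g h : F[X])
    (hfull : fullPoly f) (hgfull : fullPoly g) (hhfull : fullPoly h) :
    nu (Res f (g * h)) = nu (Res f g * Res f h) ∧
    nu (Res (f * g) h) = nu (Res f h * Res g h) := by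
  have hf := hfull.isFullSeq
  have hg := hgfull.isFullSeq
  have hh := hhfull.isFullSeq
  refine ⟨nu_Res_mul hf hg hh, ?_⟩
  rw [Res_comm (f * g), nu_Res_mul hh hf hg, Res_comm h f, Res_comm h g]

/-- multiplicativity of the ν-value of the resultant. -/
theorem stmt12 {F : Type*} [STSemifield F] (f g h : F[X])
    (hf : 0 < f.natDegree) (hg : 0 < g.natDegree) (hh : 0 < h.natDegree)
    (hfull : fullPoly f) (hgfull : fullPoly g) (hhfull : fullPoly h) :
    nu (Res f (g * h)) = nu (Res f g * Res f h) ∧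
    nu (Res (f * g) h) = nu (Res f h * Res g h) :=
  stmt12_general f g h hfull hgfull hhfull
end

section
/- Let R be a commutative semiring equipped with an idempotent semiring homomorphism ν : R → R with ghost ideal G₀ = {a ∈ R : ν(a) = a}, satisfying supertropicality (ν(a) = ν(b) implies a + b = ν(a)). Then for every ideal A of R, the supertropical radical √A = {a ∈ R : there exist k ≥ 1 and b ∈ A with a^k + b ∈ G₀ and ν(a^k + b) = ν(a^k)} is an ideal of R. -/
/-- A commutative semiring with ghosts: an idempotent "semiring homomorphism"
ghost map `nu`, satisfying supertropicality. -/
class SemiringWithGhosts (R : Type*) extends CommSemiring R where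
  nu : R → R
  nu_idem : ∀ a : R, nu (nu a) = nu a
  nu_add : ∀ a b : R, nu (a + b) = nu a + nu b
  nu_mul : ∀ a b : R, nu (a * b) = nu a * nu b
  nu_zero : nu (0 : R) = 0
  supertropicality : ∀ a b : R, nu a = nu b → a + b = nu a

open SemiringWithGhosts

/-- the supertropical radical of a subset `A` -/
def stRadical {R : Type*} [SemiringWithGhosts R] (A : Set R) : Set R :=
  {a : R | ∃ (k : ℕ) (b : R), 1 ≤ k ∧ b ∈ A ∧
      nu (a ^ k + b) = a ^ k + b ∧ nu (a ^ k + b) = nu (a ^ k)}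

/-!
The elements `x` that some `b ∈ A` turns into their ghost, `x + b = ν x`, form an ideal
`ghostifiedBy A`: closure under sums is additivity of `ν`, and closure under multiples
comes from `u · ν x = ν (u x)`, which holds because ghosts are additively idempotent by
supertropicality. Then `√A` is exactly the ordinary radical of `ghostifiedBy A`.
-/

namespace SemiringWithGhosts

variable {R : Type*} [SemiringWithGhosts R]

theorem add_self_of_nu_eq {g : R} (hg : nu g = g) : g + g = g := by
  rw [supertropicality g g rfl, hg]

theorem nu_mul_of_nu_eq (c : R) {g : R} (hg : nu g = g) : nu (c * g) = c * g := by
  rw [← supertropicality (c * g) (c * g) rfl, ← mul_add, add_self_of_nu_eq hg]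

theorem mul_nu (a b : R) : a * nu b = nu (a * b) := by
  rw [← nu_mul_of_nu_eq a (nu_idem b), nu_mul, nu_idem, ← nu_mul]

def ghostifiedBy (A : Ideal R) : Ideal R where
  carrier := {x | ∃ b ∈ A, x + b = nu x}
  zero_mem' := ⟨0, A.zero_mem, by rw [add_zero, nu_zero]⟩
  add_mem' := by
    rintro x y ⟨b, hb, hxb⟩ ⟨c, hc, hyc⟩
    exact ⟨b + c, A.add_mem hb hc, by rw [nu_add, ← hxb, ← hyc]; ac_rfl⟩
  smul_mem' := by
    rintro u x ⟨b, hb, hxb⟩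
    exact ⟨u * b, A.mul_mem_left u hb, by rw [smul_eq_mul, ← mul_add, hxb, mul_nu]⟩

theorem mem_ghostifiedBy {A : Ideal R} {x : R} : x ∈ ghostifiedBy A ↔ ∃ b ∈ A, x + b = nu x :=
  Iff.rfl

theorem nu_add_eq_self_and_nu_add_eq_iff {x b : R} :
    (nu (x + b) = x + b ∧ nu (x + b) = nu x) ↔ x + b = nu x := by
  constructor
  · rintro ⟨hghost, hnu⟩
    rw [← hghost, hnu]
  · intro h
    rw [h, nu_idem]
    exact ⟨rfl, rfl⟩

end SemiringWithGhosts

theorem Ideal.mem_radical_iff_exists_pos_pow {R : Type*} [CommSemiring R] {I : Ideal R} {a : R} :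
    a ∈ I.radical ↔ ∃ k, 1 ≤ k ∧ a ^ k ∈ I := by
  refine ⟨fun ⟨n, hn⟩ ↦ ⟨n + 1, Nat.le_add_left 1 n, ?_⟩, fun ⟨k, _, hk⟩ ↦ ⟨k, hk⟩⟩
  rw [pow_succ]
  exact I.mul_mem_right a hn

theorem stRadical_eq_radical_ghostifiedBy {R : Type*} [SemiringWithGhosts R] (A : Ideal R) :
    stRadical (A : Set R) = ((ghostifiedBy A).radical : Set R) := by
  ext a
  simp only [stRadical, Set.mem_ofPred_eq, SetLike.mem_coe, Ideal.mem_radical_iff_exists_pos_pow,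
    mem_ghostifiedBy, nu_add_eq_self_and_nu_add_eq_iff, exists_and_left]

/-- the supertropical radical of an ideal is an ideal. -/
theorem stmt18 {R : Type*} [SemiringWithGhosts R] (A : Ideal R) :
    ∃ I : Ideal R, (I : Set R) = stRadical (A : Set R) :=
  ⟨(ghostifiedBy A).radical, (stRadical_eq_radical_ghostifiedBy A).symm⟩
end
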